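/- arXiv:2404.15261 — 5 statements merged into one kernel-verified Lean document; each statement's English description precedes it below -/
import Mathlib

section
/- On the probability simplex of a connected weighted graph, the p-Beckmann distance B_p(α,β) = inf{ (Σ_e |J(e)|^p w_e)^{1/p} : BJ = α − β } defines a metric for every 1 ≤ p < ∞. -/
open Matrix Finset


lemma wcost_nonneg {m : ℕ} (w : Fin m → ℝ) (hw : ∀ e, 0 < w e) (p : ℝ)
    (J : Fin m → ℝ) : 0 ≤ ∑ e, w e * |J e| ^ p :=
  Finset.sum_nonneg fun e _ => mul_nonneg (hw e).le (Real.rpow_nonneg (abs_nonneg _) _)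

lemma wmink {m : ℕ} (w : Fin m → ℝ) (hw : ∀ e, 0 < w e) (p : ℝ) (hp : 1 ≤ p)
    (J1 J2 : Fin m → ℝ) :
    (∑ e, w e * |J1 e + J2 e| ^ p) ^ (1/p) ≤
      (∑ e, w e * |J1 e| ^ p) ^ (1/p) + (∑ e, w e * |J2 e| ^ p) ^ (1/p) := by
  have hp0 : (0:ℝ) < p := lt_of_lt_of_le one_pos hp
  set f : Fin m → ℝ := fun e => w e ^ (1/p) * |J1 e|
  set g : Fin m → ℝ := fun e => w e ^ (1/p) * |J2 e|
  have key : ∀ (x : ℝ) (e : Fin m),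
      (w e ^ (1/p) * |x|) ^ p = w e * |x| ^ p := by
    intro x e
    rw [Real.mul_rpow (Real.rpow_nonneg (hw e).le _) (abs_nonneg _),
      ← Real.rpow_mul (hw e).le, one_div_mul_cancel hp0.ne', Real.rpow_one]
  have h1 : ∑ e, w e * |J1 e + J2 e| ^ p ≤ ∑ e, (f e + g e) ^ p := by
    apply Finset.sum_le_sum
    intro e _
    have habs : w e ^ (1/p) * |J1 e + J2 e| ≤ f e + g e := by
      have := abs_add_le (J1 e) (J2 e)
      have hwn : (0:ℝ) ≤ w e ^ (1/p) := Real.rpow_nonneg (hw e).le _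
      simp only [f, g]
      nlinarith
    calc w e * |J1 e + J2 e| ^ p = (w e ^ (1/p) * |J1 e + J2 e|) ^ p := (key _ e).symm
      _ ≤ (f e + g e) ^ p := Real.rpow_le_rpow
          (mul_nonneg (Real.rpow_nonneg (hw e).le _) (abs_nonneg _)) habs hp0.le
  calc (∑ e, w e * |J1 e + J2 e| ^ p) ^ (1/p)
      ≤ (∑ e, (f e + g e) ^ p) ^ (1/p) :=
        Real.rpow_le_rpow (wcost_nonneg w hw p _) h1 (by positivity)
    _ ≤ (∑ e, f e ^ p) ^ (1/p) + (∑ e, g e ^ p) ^ (1/p) :=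
        Real.Lp_add_le_of_nonneg (f := f) (g := g) Finset.univ hp
          (fun e _ => mul_nonneg (Real.rpow_nonneg (hw e).le _) (abs_nonneg _))
          (fun e _ => mul_nonneg (Real.rpow_nonneg (hw e).le _) (abs_nonneg _))
    _ = (∑ e, w e * |J1 e| ^ p) ^ (1/p) + (∑ e, w e * |J2 e| ^ p) ^ (1/p) := by
        congr 1 <;> · congr 1; exact Finset.sum_congr rfl fun e _ => key _ e

/-- On the probability simplex of a connected weighted graph, the
`p`-Beckmann distance `B_p(α,β) = inf{ (Σ_e |J(e)|^p w_e)^{1/p} : BJ = α − β }`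
is a metric for every `1 ≤ p < ∞`. Connectivity is encoded by the hypothesis
that every mean-zero vector lies in the column space of the incidence matrix. -/
theorem beckmann_p_is_metric
    (n m : ℕ) (B : Matrix (Fin n) (Fin m) ℝ) (w : Fin m → ℝ)
    (hw : ∀ e, 0 < w e)
    (hcol : ∀ x : Fin n → ℝ, ∑ i, x i = 0 → ∃ J : Fin m → ℝ, B.mulVec J = x)
    (p : ℝ) (hp : 1 ≤ p) :
    let P : Set (Fin n → ℝ) := {x | (∀ i, 0 ≤ x i) ∧ ∑ i, x i = 1}
    let Bp : (Fin n → ℝ) → (Fin n → ℝ) → ℝ := fun α β =>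
      sInf {c : ℝ | ∃ J : Fin m → ℝ, B.mulVec J = α - β ∧
        c = (∑ e, w e * |J e| ^ p) ^ (1 / p)}
    (∀ α ∈ P, ∀ β ∈ P, 0 ≤ Bp α β) ∧
    (∀ α ∈ P, ∀ β ∈ P, (Bp α β = 0 ↔ α = β)) ∧
    (∀ α ∈ P, ∀ β ∈ P, Bp α β = Bp β α) ∧
    (∀ α ∈ P, ∀ β ∈ P, ∀ γ ∈ P, Bp α γ ≤ Bp α β + Bp β γ) := by
  intro P Bp
  have hp0 : (0:ℝ) < p := lt_of_lt_of_le one_pos hp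
  set S : (Fin n → ℝ) → (Fin n → ℝ) → Set ℝ := fun α β =>
    {c : ℝ | ∃ J : Fin m → ℝ, B.mulVec J = α - β ∧
        c = (∑ e, w e * |J e| ^ p) ^ (1 / p)} with hS
  have hBp : ∀ α β, Bp α β = sInf (S α β) := fun _ _ => rfl
  -- bounded below by 0
  have hbdd : ∀ α β, ∀ c ∈ S α β, (0:ℝ) ≤ c := by
    rintro α β c ⟨J, -, rfl⟩
    exact Real.rpow_nonneg (wcost_nonneg w hw p J) _
  have hbddB : ∀ α β, BddBelow (S α β) := fun α β => ⟨0, fun c hc => hbdd α β c hc⟩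
  -- nonempty
  have hne : ∀ α ∈ P, ∀ β ∈ P, (S α β).Nonempty := by
    intro α hα β hβ
    obtain ⟨J, hJ⟩ := hcol (α - β) (by
      simp only [Pi.sub_apply, Finset.sum_sub_distrib, hα.2, hβ.2, sub_self])
    exact ⟨_, J, hJ, rfl⟩
  have hnonneg : ∀ α ∈ P, ∀ β ∈ P, 0 ≤ Bp α β := by
    intro α hα β hβ
    exact le_csInf (hne α hα β hβ) (hbdd α β)
  refine ⟨hnonneg, ?_, ?_, ?_⟩
  · -- identity of indiscernibles
    intro α hα β hβ
    constructor
    · intro h0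
      by_contra hne'
      have hx : α - β ≠ 0 := sub_ne_zero_of_ne hne'
      obtain ⟨i, hi⟩ : ∃ i, (α - β) i ≠ 0 := by
        by_contra hc; push_neg at hc; exact hx (funext hc)
      set K : ℝ := ∑ e, |B i e| / (w e) ^ (1/p) with hK
      have hK0 : 0 ≤ K := Finset.sum_nonneg fun e _ =>
        div_nonneg (abs_nonneg _) (Real.rpow_nonneg (hw e).le _)
      have key : ∀ c ∈ S α β, |(α - β) i| ≤ c * K := by
        rintro c ⟨J, hJ, rfl⟩
        have hSnn : 0 ≤ ∑ e, w e * |J e| ^ p := wcost_nonneg w hw p J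
        set c := (∑ e, w e * |J e| ^ p) ^ (1/p) with hc
        have hJb : ∀ e, |J e| ≤ c / (w e) ^ (1/p) := by
          intro e
          have h1 : w e * |J e| ^ p ≤ ∑ e, w e * |J e| ^ p := by
            apply Finset.single_le_sum (f := fun e => w e * |J e| ^ p)
              (fun e _ => mul_nonneg (hw e).le (Real.rpow_nonneg (abs_nonneg _) _))
              (Finset.mem_univ e)
          have h2 : |J e| ^ p ≤ (∑ e, w e * |J e| ^ p) / w e :=
            (le_div_iff₀ (hw e)).2 (by linarith [h1])
          have h3 : (|J e| ^ p) ^ (1/p) ≤ ((∑ e, w e * |J e| ^ p) / w e) ^ (1/p) :=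
            Real.rpow_le_rpow (Real.rpow_nonneg (abs_nonneg _) _) h2 (by positivity)
          rwa [← Real.rpow_mul (abs_nonneg _), mul_one_div_cancel hp0.ne',
            Real.rpow_one, Real.div_rpow hSnn (hw e).le] at h3
        calc |(α - β) i| = |∑ e, B i e * J e| := by rw [← hJ]; rfl
          _ ≤ ∑ e, |B i e * J e| := Finset.abs_sum_le_sum_abs _ _
          _ ≤ ∑ e, |B i e| * (c / (w e) ^ (1/p)) := by
              apply Finset.sum_le_sum
              intro e _
              rw [abs_mul]
              exact mul_le_mul_of_nonneg_left (hJb e) (abs_nonneg _)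
          _ = c * K := by
              rw [hK, Finset.mul_sum]
              exact Finset.sum_congr rfl fun e _ => by ring
      obtain ⟨c0, hc0⟩ := hne α hα β hβ
      have hxi : 0 < |(α - β) i| := abs_pos.2 hi
      have hKpos : 0 < K := by
        rcases lt_or_eq_of_le hK0 with h | h
        · exact h
        · exfalso; have := key c0 hc0; rw [← h, mul_zero] at this; linarith
      have hlb : |(α - β) i| / K ≤ sInf (S α β) :=
        le_csInf (hne α hα β hβ) fun c hc => (div_le_iff₀ hKpos).2 (key c hc)
      rw [hBp] at h0
      rw [h0] at hlb
      have : 0 < |(α - β) i| / K := div_pos hxi hKpos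
      linarith
    · intro h
      subst h
      have h0mem : (0:ℝ) ∈ S α α := by
        refine ⟨0, by simp [Matrix.mulVec_zero], ?_⟩
        have : ∀ e : Fin m, w e * |(0 : Fin m → ℝ) e| ^ p = 0 := by
          intro e
          simp [Real.zero_rpow hp0.ne']
        rw [Finset.sum_congr rfl fun e _ => this e, Finset.sum_const, smul_zero,
          Real.zero_rpow (by positivity : (1/p) ≠ 0)]
      exact le_antisymm (csInf_le (hbddB α α) h0mem) (hnonneg α hα α hα)
  · -- symmetry
    intro α hα β hβ
    rw [hBp, hBp]
    congr 1
    ext c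
    constructor
    · rintro ⟨J, hJ, rfl⟩
      exact ⟨-J, by rw [Matrix.mulVec_neg, hJ]; abel, by simp⟩
    · rintro ⟨J, hJ, rfl⟩
      exact ⟨-J, by rw [Matrix.mulVec_neg, hJ]; abel, by simp⟩
  · -- triangle
    intro α hα β hβ γ hγ
    have key : ∀ c1 ∈ S α β, ∀ c2 ∈ S β γ, sInf (S α γ) ≤ c1 + c2 := by
      rintro c1 ⟨J1, h1, rfl⟩ c2 ⟨J2, h2, rfl⟩
      have hmem : ((∑ e, w e * |J1 e + J2 e| ^ p) ^ (1/p)) ∈ S α γ :=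
        ⟨J1 + J2, by rw [Matrix.mulVec_add, h1, h2, sub_add_sub_cancel], rfl⟩
      exact le_trans (csInf_le (hbddB α γ) hmem) (wmink w hw p hp J1 J2)
    have step1 : ∀ c2 ∈ S β γ, sInf (S α γ) - c2 ≤ sInf (S α β) := by
      intro c2 hc2
      exact le_csInf (hne α hα β hβ) fun c1 hc1 => by linarith [key c1 hc1 c2 hc2]
    have step2 : sInf (S α γ) - sInf (S α β) ≤ sInf (S β γ) :=
      le_csInf (hne β hβ γ hγ) fun c2 hc2 => by linarith [step1 c2 hc2]
    rw [hBp, hBp, hBp]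
    linarith
end

section
/- Suppose all edge weights satisfy w_e ≥ 1. Then for probability vectors α, β on a connected weighted graph and 1 ≤ p < ∞, the p-Beckmann distance satisfies B_p(α,β) ≤ W_p(α,β)^p, where W_p is the p-Wasserstein distance with respect to the weighted shortest-path metric d₁. -/
open Matrix Finset

/-- A walk in a graph given by oriented edge endpoints `ends : Fin m → Fin n × Fin n`:
a list of steps, each an edge together with a direction of traversal. -/
def IsWalk {n m : ℕ} (ends : Fin m → Fin n × Fin n) :
    Fin n → Fin n → List (Fin m × Bool) → Prop
  | i, j, [] => i = j
  | i, j, (e, true) :: rest => (ends e).1 = i ∧ IsWalk ends (ends e).2 j rest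
  | i, j, (e, false) :: rest => (ends e).2 = i ∧ IsWalk ends (ends e).1 j rest

/-- The weighted 1-shortest-path distance `d₁(i,j)`: infimum of the total edge
weight over walks from `i` to `j`. -/
noncomputable def pathDist {n m : ℕ} (ends : Fin m → Fin n × Fin n)
    (w : Fin m → ℝ) (i j : Fin n) : ℝ :=
  sInf {c : ℝ | ∃ s : List (Fin m × Bool), IsWalk ends i j s ∧
    c = (s.map (fun q => w q.1)).sum}

/-!
Given a transport plan `π`, send the mass `π i j` along a walk from `i` to `j` whose length is
close to `d₁(i,j)`. The resulting flow has divergence `α - β`, and since the weighted `ℓᵖ` cost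
is a norm, its cost is at most `∑ π i j · (cost of the unit flow along the walk)`. A unit flow
on an edge costs `w_e ^ (1/p) ≤ w_e`, so a walk's flow costs at most its length, and
`d₁(i,j) ≤ d₁(i,j) ^ p` because `d₁(i,j) ≥ 1` whenever `i ≠ j`. Hence every plan `π` yields a
flow of cost at most `∑ π i j d₁(i,j) ^ p + ε`.
-/

section WeightedNorm

variable {ι : Type*}

/-- Rescaling by `w e ^ (1 / p)` turns the weighted `ℓᵖ` cost into the norm of `PiLp`. -/
noncomputable def weightedLp (p : ℝ) (w : ι → ℝ) :
    (ι → ℝ) →ₗ[ℝ] PiLp (ENNReal.ofReal p) (fun _ : ι => ℝ) :=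
  (WithLp.linearEquiv (ENNReal.ofReal p) ℝ (ι → ℝ)).symm.toLinearMap ∘ₗ
    LinearMap.pi fun e => w e ^ (1 / p) • LinearMap.proj e

lemma weightedLp_apply (p : ℝ) (w : ι → ℝ) (J : ι → ℝ) (e : ι) :
    weightedLp p w J e = w e ^ (1 / p) * J e := rfl

lemma norm_weightedLp [Fintype ι] {p : ℝ} (hp : 0 < p) {w : ι → ℝ} (hw : ∀ e, 0 ≤ w e)
    (J : ι → ℝ) :
    ‖weightedLp p w J‖ = (∑ e, w e * |J e| ^ p) ^ (1 / p) := by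
  rw [PiLp.norm_eq_sum (by rwa [ENNReal.toReal_ofReal hp.le]), ENNReal.toReal_ofReal hp.le]
  congr 1
  refine Finset.sum_congr rfl fun e _ => ?_
  rw [weightedLp_apply, Real.norm_eq_abs, abs_mul, Real.mul_rpow (abs_nonneg _) (abs_nonneg _),
    abs_of_nonneg (Real.rpow_nonneg (hw e) _), one_div, Real.rpow_inv_rpow (hw e) hp.ne']

lemma norm_weightedLp_single [Fintype ι] [DecidableEq ι] {p : ℝ} (hp : 1 ≤ p) (w : ι → ℝ)
    (e : ι) (x : ℝ) :
    ‖weightedLp p w (Pi.single e x)‖ = |w e ^ (1 / p) * x| := by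
  have : Fact (1 ≤ ENNReal.ofReal p) := ⟨ENNReal.one_le_ofReal.2 hp⟩
  have hsingle : weightedLp p w (Pi.single e x) = PiLp.single _ e (w e ^ (1 / p) * x) := by
    ext e'
    rcases eq_or_ne e' e with rfl | he
    · simp [weightedLp_apply]
    · simp [weightedLp_apply, he]
  rw [hsingle, PiLp.norm_single, Real.norm_eq_abs]

end WeightedNorm

lemma sum_smul_single_sub_single {ι : Type*} [Fintype ι] [DecidableEq ι] {α β : ι → ℝ}
    (π : Matrix ι ι ℝ)
    (hπr : ∀ i, ∑ j, π i j = α i) (hπc : ∀ j, ∑ i, π i j = β j) :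
    ∑ i, ∑ j, π i j • (Pi.single i 1 - Pi.single j 1 : ι → ℝ) = α - β := by
  ext k
  simp only [Finset.sum_apply, Pi.smul_apply, Pi.sub_apply, Pi.single_apply, smul_eq_mul, mul_sub,
    mul_ite, mul_one, mul_zero, Finset.sum_sub_distrib]
  rw [Finset.sum_comm (f := fun i j => if k = j then π i j else 0)]
  simp [hπr, hπc]

section Walks

variable {n m : ℕ}

def stepFlow (q : Fin m × Bool) : Fin m → ℝ :=
  Pi.single q.1 (if q.2 then 1 else -1)

def walkFlow (s : List (Fin m × Bool)) : Fin m → ℝ :=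
  (s.map stepFlow).sum

@[simp]
lemma walkFlow_nil : walkFlow ([] : List (Fin m × Bool)) = 0 := rfl

@[simp]
lemma walkFlow_cons (q : Fin m × Bool) (s : List (Fin m × Bool)) :
    walkFlow (q :: s) = stepFlow q + walkFlow s := List.sum_cons

lemma mulVec_single_of_incidence {ends : Fin m → Fin n × Fin n} {B : Matrix (Fin n) (Fin m) ℝ}
    (hB : ∀ i e, B i e =
      (if (ends e).1 = i then (1 : ℝ) else 0) - (if (ends e).2 = i then 1 else 0))
    (e : Fin m) (x : ℝ) :
    B *ᵥ Pi.single e x = x • (Pi.single (ends e).1 1 - Pi.single (ends e).2 1) := by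
  ext k
  simp [hB, Pi.single_apply, eq_comm, mul_comm]

lemma mulVec_walkFlow {ends : Fin m → Fin n × Fin n} {B : Matrix (Fin n) (Fin m) ℝ}
    (hB : ∀ i e, B i e =
      (if (ends e).1 = i then (1 : ℝ) else 0) - (if (ends e).2 = i then 1 else 0))
    {s : List (Fin m × Bool)} {i j : Fin n} (hs : IsWalk ends i j s) :
    B *ᵥ walkFlow s = Pi.single i 1 - Pi.single j 1 := by
  induction s generalizing i with
  | nil =>
    cases hs
    simp
  | cons q s ih =>
    obtain ⟨e, _ | _⟩ := q <;> obtain ⟨rfl, hs⟩ := hs <;>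
      simp [stepFlow, Matrix.mulVec_add, mulVec_single_of_incidence hB, ih hs]

lemma norm_weightedLp_stepFlow_le {p : ℝ} (hp : 1 ≤ p) {w : Fin m → ℝ} (hw : ∀ e, 1 ≤ w e)
    (q : Fin m × Bool) : ‖weightedLp p w (stepFlow q)‖ ≤ w q.1 := by
  have hsign : |(if q.2 then 1 else -1 : ℝ)| = 1 := by split <;> simp
  rw [stepFlow, norm_weightedLp_single hp, abs_mul, hsign, mul_one,
    abs_of_nonneg (Real.rpow_nonneg (zero_le_one.trans (hw _)) _)]
  exact Real.rpow_le_self_of_one_le (hw _) (div_le_one_of_le₀ hp (zero_le_one.trans hp))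

lemma norm_weightedLp_walkFlow_le {p : ℝ} (hp : 1 ≤ p) {w : Fin m → ℝ} (hw : ∀ e, 1 ≤ w e)
    (s : List (Fin m × Bool)) :
    ‖weightedLp p w (walkFlow s)‖ ≤ (s.map fun q => w q.1).sum := by
  have : Fact (1 ≤ ENNReal.ofReal p) := ⟨ENNReal.one_le_ofReal.2 hp⟩
  induction s with
  | nil => simp
  | cons q s ih =>
    rw [walkFlow_cons, map_add, List.map_cons, List.sum_cons]
    exact (norm_add_le _ _).trans (add_le_add (norm_weightedLp_stepFlow_le hp hw q) ih)

end Walks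

section PathDist

variable {n m : ℕ} {ends : Fin m → Fin n × Fin n} {w : Fin m → ℝ}

lemma walk_length_nonneg (hw : ∀ e, 0 ≤ w e) (s : List (Fin m × Bool)) :
    0 ≤ (s.map fun q => w q.1).sum :=
  List.sum_nonneg fun _ hx => by
    obtain ⟨q, -, rfl⟩ := List.mem_map.1 hx
    exact hw q.1

lemma pathDist_nonneg (hw : ∀ e, 0 ≤ w e) (i j : Fin n) : 0 ≤ pathDist ends w i j :=
  Real.sInf_nonneg fun _ ⟨s, _, hc⟩ => hc ▸ walk_length_nonneg hw s

lemma one_le_pathDist (hw : ∀ e, 1 ≤ w e) {i j : Fin n} (hwalk : ∃ s, IsWalk ends i j s)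
    (hij : i ≠ j) : 1 ≤ pathDist ends w i j := by
  obtain ⟨s, hs⟩ := hwalk
  refine le_csInf ⟨_, s, hs, rfl⟩ ?_
  rintro _ ⟨_ | ⟨q, s⟩, hs, rfl⟩
  · exact absurd hs hij
  · rw [List.map_cons, List.sum_cons]
    linarith [hw q.1, walk_length_nonneg (fun e => zero_le_one.trans (hw e)) s]

lemma exists_walk_length_le_pathDist_rpow_add (hw : ∀ e, 1 ≤ w e) {p : ℝ} (hp : 1 ≤ p)
    {i j : Fin n} (hwalk : ∃ s, IsWalk ends i j s) {ε : ℝ} (hε : 0 < ε) :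
    ∃ s, IsWalk ends i j s ∧ (s.map fun q => w q.1).sum ≤ pathDist ends w i j ^ p + ε := by
  rcases eq_or_ne i j with rfl | hij
  · have hw₀ e : 0 ≤ w e := zero_le_one.trans (hw e)
    have hd := Real.rpow_nonneg (pathDist_nonneg (ends := ends) hw₀ i i) p
    exact ⟨[], rfl, by simp only [List.map_nil, List.sum_nil]; linarith⟩
  obtain ⟨s, hs⟩ := hwalk
  obtain ⟨_, ⟨s, hs, rfl⟩, hlt⟩ :=
    exists_lt_of_csInf_lt (s := {c : ℝ | ∃ s, IsWalk ends i j s ∧ c = (s.map fun q => w q.1).sum})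
      ⟨_, s, hs, rfl⟩ (lt_add_of_pos_right (pathDist ends w i j) hε)
  have hd := Real.self_le_rpow_of_one_le (one_le_pathDist hw ⟨s, hs⟩ hij) hp
  exact ⟨s, hs, by linarith⟩

end PathDist

lemma sInf_le_sInf_rpow {S T : Set ℝ} {p : ℝ} (hp : 0 < p) (hS : ∀ b ∈ S, 0 ≤ b)
    (hT : T.Nonempty) (hT₀ : ∀ c ∈ T, 0 ≤ c) (h : ∀ c ∈ T, ∀ ε > 0, ∃ b ∈ S, b ≤ c ^ p + ε) :
    sInf S ≤ sInf T ^ p := by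
  have hS₀ : 0 ≤ sInf S := Real.sInf_nonneg hS
  have hle : ∀ c ∈ T, sInf S ≤ c ^ p := fun c hc => le_of_forall_pos_le_add fun ε hε => by
    obtain ⟨b, hb, hbc⟩ := h c hc ε hε
    exact (csInf_le ⟨0, hS⟩ hb).trans hbc
  have hroot : sInf S ^ p⁻¹ ≤ sInf T := le_csInf hT fun c hc =>
    (Real.rpow_inv_le_iff_of_pos hS₀ (hT₀ c hc) hp).2 (hle c hc)
  calc sInf S = (sInf S ^ p⁻¹) ^ p := (Real.rpow_inv_rpow hS₀ hp.ne').symm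
    _ ≤ sInf T ^ p := Real.rpow_le_rpow (Real.rpow_nonneg hS₀ _) hroot hp.le

theorem exists_flow_norm_le_transport_cost {n m : ℕ} {ends : Fin m → Fin n × Fin n}
    {w : Fin m → ℝ} (hw : ∀ e, 1 ≤ w e) {B : Matrix (Fin n) (Fin m) ℝ}
    (hB : ∀ i e, B i e =
      (if (ends e).1 = i then (1 : ℝ) else 0) - (if (ends e).2 = i then 1 else 0))
    (hconn : ∀ i j : Fin n, ∃ s : List (Fin m × Bool), IsWalk ends i j s)
    {p : ℝ} (hp : 1 ≤ p) {α β : Fin n → ℝ} (hα : ∑ i, α i = 1) {π : Matrix (Fin n) (Fin n) ℝ}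
    (hπ : ∀ i j, 0 ≤ π i j) (hπr : ∀ i, ∑ j, π i j = α i) (hπc : ∀ j, ∑ i, π i j = β j)
    {ε : ℝ} (hε : 0 < ε) :
    ∃ J : Fin m → ℝ, B *ᵥ J = α - β ∧
      ‖weightedLp p w J‖ ≤ ∑ i, ∑ j, π i j * pathDist ends w i j ^ p + ε := by
  have : Fact (1 ≤ ENNReal.ofReal p) := ⟨ENNReal.one_le_ofReal.2 hp⟩
  choose s hs hlen using fun i j => exists_walk_length_le_pathDist_rpow_add hw hp (hconn i j) hε
  refine ⟨∑ i, ∑ j, π i j • walkFlow (s i j), ?_, ?_⟩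
  · simp only [Matrix.mulVec_sum, Matrix.mulVec_smul, mulVec_walkFlow hB (hs _ _)]
    exact sum_smul_single_sub_single π hπr hπc
  calc ‖weightedLp p w (∑ i, ∑ j, π i j • walkFlow (s i j))‖
      ≤ ∑ i, ∑ j, π i j * ‖weightedLp p w (walkFlow (s i j))‖ := by
        simp only [map_sum, map_smul]
        refine (norm_sum_le _ _).trans (Finset.sum_le_sum fun i _ => (norm_sum_le _ _).trans ?_)
        simp only [norm_smul, Real.norm_of_nonneg (hπ i _), le_refl]
    _ ≤ ∑ i, ∑ j, π i j * (pathDist ends w i j ^ p + ε) := by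
        gcongr with i _ j _
        · exact hπ i j
        · exact (norm_weightedLp_walkFlow_le hp hw _).trans (hlen i j)
    _ = ∑ i, ∑ j, π i j * pathDist ends w i j ^ p + ε := by
        simp only [mul_add, Finset.sum_add_distrib, ← Finset.sum_mul, hπr, hα, one_mul]

theorem beckmann_le_wasserstein_pow_general
    (n m : ℕ) (ends : Fin m → Fin n × Fin n)
    (w : Fin m → ℝ) (hw : ∀ e, 1 ≤ w e)
    (B : Matrix (Fin n) (Fin m) ℝ)
    (hB : ∀ i e, B i e =
      (if (ends e).1 = i then (1 : ℝ) else 0) - (if (ends e).2 = i then 1 else 0))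
    (hconn : ∀ i j : Fin n, ∃ s : List (Fin m × Bool), IsWalk ends i j s)
    (p : ℝ) (hp : 1 ≤ p)
    (α β : Fin n → ℝ)
    (hα : (∀ i, 0 ≤ α i) ∧ ∑ i, α i = 1)
    (hβ : (∀ i, 0 ≤ β i) ∧ ∑ i, β i = 1) :
    sInf {c : ℝ | ∃ J : Fin m → ℝ, B.mulVec J = α - β ∧
        c = (∑ e, w e * |J e| ^ p) ^ (1 / p)}
      ≤ (sInf {c : ℝ | ∃ π : Matrix (Fin n) (Fin n) ℝ,
          (∀ i j, 0 ≤ π i j) ∧ (∀ i, ∑ j, π i j = α i) ∧ (∀ j, ∑ i, π i j = β j) ∧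
          c = (∑ i, ∑ j, π i j * (pathDist ends w i j) ^ p) ^ (1 / p)}) ^ p := by
  have hp₀ : 0 < p := one_pos.trans_le hp
  have hw₀ : ∀ e, 0 ≤ w e := fun e => zero_le_one.trans (hw e)
  have : Fact (1 ≤ ENNReal.ofReal p) := ⟨ENNReal.one_le_ofReal.2 hp⟩
  have hcost : ∀ π : Matrix (Fin n) (Fin n) ℝ, (∀ i j, 0 ≤ π i j) →
      0 ≤ ∑ i, ∑ j, π i j * pathDist ends w i j ^ p := fun π hπ =>
    Finset.sum_nonneg fun i _ => Finset.sum_nonneg fun j _ =>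
      mul_nonneg (hπ i j) (Real.rpow_nonneg (pathDist_nonneg hw₀ i j) p)
  refine sInf_le_sInf_rpow hp₀ ?_ ?_ ?_ ?_
  · rintro _ ⟨J, -, rfl⟩
    exact norm_weightedLp hp₀ hw₀ J ▸ norm_nonneg _
  · exact ⟨_, Matrix.of fun i j => α i * β j, fun i j => mul_nonneg (hα.1 i) (hβ.1 j),
      fun i => by simp [← Finset.mul_sum, hβ.2], fun j => by simp [← Finset.sum_mul, hα.2], rfl⟩
  · rintro _ ⟨π, hπ, -, -, rfl⟩
    exact Real.rpow_nonneg (hcost π hπ) _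
  · rintro _ ⟨π, hπ, hπr, hπc, rfl⟩ ε hε
    obtain ⟨J, hJ, hJle⟩ := exists_flow_norm_le_transport_cost hw hB hconn hp hα.2 hπ hπr hπc hε
    refine ⟨_, ⟨J, hJ, rfl⟩, ?_⟩
    rwa [← norm_weightedLp hp₀ hw₀, one_div, Real.rpow_inv_rpow (hcost π hπ) hp₀.ne']

/-- If all edge weights satisfy `w_e ≥ 1`, then for probability
vectors `α, β` on a connected weighted graph and `1 ≤ p < ∞`,
`B_p(α,β) ≤ W_p(α,β)^p`, where `W_p` is the `p`-Wasserstein distance for the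
weighted shortest-path metric `d₁`. -/
theorem beckmann_le_wasserstein_pow
    (n m : ℕ) (ends : Fin m → Fin n × Fin n)
    (hloop : ∀ e, (ends e).1 ≠ (ends e).2)
    (w : Fin m → ℝ) (hw : ∀ e, 1 ≤ w e)
    (B : Matrix (Fin n) (Fin m) ℝ)
    (hB : ∀ i e, B i e =
      (if (ends e).1 = i then (1 : ℝ) else 0) - (if (ends e).2 = i then 1 else 0))
    (hconn : ∀ i j : Fin n, ∃ s : List (Fin m × Bool), IsWalk ends i j s)
    (p : ℝ) (hp : 1 ≤ p)
    (α β : Fin n → ℝ)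
    (hα : (∀ i, 0 ≤ α i) ∧ ∑ i, α i = 1)
    (hβ : (∀ i, 0 ≤ β i) ∧ ∑ i, β i = 1) :
    sInf {c : ℝ | ∃ J : Fin m → ℝ, B.mulVec J = α - β ∧
        c = (∑ e, w e * |J e| ^ p) ^ (1 / p)}
      ≤ (sInf {c : ℝ | ∃ π : Matrix (Fin n) (Fin n) ℝ,
          (∀ i j, 0 ≤ π i j) ∧ (∀ i, ∑ j, π i j = α i) ∧ (∀ j, ∑ i, π i j = β j) ∧
          c = (∑ i, ∑ j, π i j * (pathDist ends w i j) ^ p) ^ (1 / p)}) ^ p :=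
  beckmann_le_wasserstein_pow_general n m ends w hw B hB hconn p hp α β hα hβ
end

section
/- Let T be a weighted tree with fixed edge orientations. For an oriented edge e = (i,j), let K_α(e) denote the total α-mass of the vertex set of the subtree containing i after removing e. Then K_α − K_β is the unique flow J with BJ = α − β, and hence B_p(α,β) = ‖K_α − K_β‖_{w,p} for all 1 ≤ p < ∞. -/
open Matrix Finset
open scoped Classical

namespace TreeBeck
variable {n m : ℕ}
noncomputable def unitFlow (e : Fin m) : Fin m → ℝ := fun f => if e = f then 1 else 0
noncomputable def flowOf : List (Fin m × Bool) → Fin m → ℝ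
  | [] => 0
  | (e, true) :: r => unitFlow e + flowOf r
  | (e, false) :: r => (-unitFlow e) + flowOf r

variable (ends : Fin m → Fin n × Fin n)

lemma mulVec_unitFlow (B : Matrix (Fin n) (Fin m) ℝ) (e : Fin m) :
    B.mulVec (unitFlow e) = fun v => B v e := by
  funext v
  simp [Matrix.mulVec, dotProduct, unitFlow, mul_ite]

lemma flowOf_avoid {e : Fin m} : ∀ {s : List (Fin m × Bool)},
    (∀ q ∈ s, q.1 ≠ e) → flowOf s e = 0 := by
  intro s
  induction s with
  | nil => intro _; simp [flowOf]
  | cons q r ih =>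
    intro h
    obtain ⟨f, b⟩ := q
    have hf : f ≠ e := h (f, b) (by simp)
    have hr := ih (fun q hq => h q (List.mem_cons_of_mem _ hq))
    cases b <;> simp [flowOf, unitFlow, hf, hr]

lemma mulVec_flowOf (B : Matrix (Fin n) (Fin m) ℝ)
    (hB : ∀ i e, B i e =
      (if (ends e).1 = i then (1 : ℝ) else 0) - (if (ends e).2 = i then 1 else 0)) :
    ∀ {s : List (Fin m × Bool)} {i j : Fin n}, IsWalk ends i j s →
      B.mulVec (flowOf s) = fun v => (if i = v then (1:ℝ) else 0) - (if j = v then 1 else 0) := by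
  intro s
  induction s with
  | nil =>
    intro i j hs
    have h : i = j := hs
    subst h
    funext v
    simp [flowOf, Matrix.mulVec, dotProduct]
  | cons q r ih =>
    intro i j hs
    obtain ⟨e, b⟩ := q
    cases b
    · obtain ⟨h1, h2⟩ := hs
      have := ih h2
      funext v
      have hadd : flowOf ((e, false) :: r) = (-unitFlow e) + flowOf r := rfl
      rw [hadd, Matrix.mulVec_add, Matrix.mulVec_neg, mulVec_unitFlow]
      have hv := congrFun this v
      simp only [Pi.add_apply, Pi.neg_apply, hv, hB v e]
      rw [← h1]
      by_cases hv1 : (ends e).1 = v <;> by_cases hv2 : (ends e).2 = v <;>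
        by_cases hv3 : j = v <;> simp [hv1, hv2, hv3] <;> ring
    · obtain ⟨h1, h2⟩ := hs
      have := ih h2
      funext v
      have hadd : flowOf ((e, true) :: r) = unitFlow e + flowOf r := rfl
      rw [hadd, Matrix.mulVec_add, mulVec_unitFlow]
      have hv := congrFun this v
      simp only [Pi.add_apply, hv, hB v e]
      rw [← h1]
      by_cases hv1 : (ends e).1 = v <;> by_cases hv2 : (ends e).2 = v <;>
        by_cases hv3 : j = v <;> simp [hv1, hv2, hv3] <;> ring

def Reach (e : Fin m) (x k : Fin n) : Prop :=
  ∃ s : List (Fin m × Bool), IsWalk ends x k s ∧ ∀ q ∈ s, q.1 ≠ e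

/-- acyclicity: the two endpoints of `e` are not connected avoiding `e`. -/
lemma sep (B : Matrix (Fin n) (Fin m) ℝ)
    (hB : ∀ i e, B i e =
      (if (ends e).1 = i then (1 : ℝ) else 0) - (if (ends e).2 = i then 1 else 0))
    (hker : ∀ J : Fin m → ℝ, B.mulVec J = 0 → J = 0)
    (e : Fin m) : ¬ Reach ends e (ends e).1 (ends e).2 := by
  rintro ⟨s, hs, has⟩
  have hdiv := mulVec_flowOf ends B hB hs
  have hunit : B.mulVec (unitFlow e) =
      fun v => (if (ends e).1 = v then (1:ℝ) else 0) - (if (ends e).2 = v then 1 else 0) := by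
    rw [mulVec_unitFlow]
    funext v
    exact hB v e
  have hz : B.mulVec (flowOf s - unitFlow e) = 0 := by
    rw [Matrix.mulVec_sub, hdiv, hunit]
    funext v; simp
  have := hker _ hz
  have he := congrFun this e
  simp only [Pi.sub_apply, Pi.zero_apply, flowOf_avoid has, unitFlow] at he
  simp at he

lemma reach_refl (e : Fin m) (x : Fin n) : Reach ends e x x :=
  ⟨[], rfl, by simp⟩

lemma isWalk_append {i j k : Fin n} {s t : List (Fin m × Bool)}
    (hs : IsWalk ends i j s) (ht : IsWalk ends j k t) : IsWalk ends i k (s ++ t) := by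
  induction s generalizing i with
  | nil =>
    have h : i = j := hs
    subst h; simpa using ht
  | cons q r ih =>
    obtain ⟨e, b⟩ := q
    cases b
    · obtain ⟨h1, h2⟩ := hs
      exact ⟨h1, ih h2⟩
    · obtain ⟨h1, h2⟩ := hs
      exact ⟨h1, ih h2⟩

def revWalk (s : List (Fin m × Bool)) : List (Fin m × Bool) :=
  (s.map (fun q => (q.1, !q.2))).reverse

lemma isWalk_rev {i j : Fin n} {s : List (Fin m × Bool)}
    (hs : IsWalk ends i j s) : IsWalk ends j i (revWalk s) := by
  induction s generalizing i with
  | nil =>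
    have h : i = j := hs
    subst h; exact rfl
  | cons q r ih =>
    obtain ⟨e, b⟩ := q
    have hrev : revWalk ((e, b) :: r) = revWalk r ++ [(e, !b)] := by
      simp [revWalk]
    rw [hrev]
    cases b
    · obtain ⟨h1, h2⟩ := hs
      exact isWalk_append ends (ih h2) ⟨rfl, h1⟩
    · obtain ⟨h1, h2⟩ := hs
      exact isWalk_append ends (ih h2) ⟨rfl, h1⟩

lemma reach_trans {e : Fin m} {x y z : Fin n}
    (h1 : Reach ends e x y) (h2 : Reach ends e y z) : Reach ends e x z := by
  obtain ⟨s, hs, has⟩ := h1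
  obtain ⟨t, ht, hat⟩ := h2
  exact ⟨s ++ t, isWalk_append ends hs ht, by
    intro q hq
    rcases List.mem_append.mp hq with h | h
    · exact has q h
    · exact hat q h⟩

lemma reach_symm {e : Fin m} {x y : Fin n} (h : Reach ends e x y) : Reach ends e y x := by
  obtain ⟨s, hs, has⟩ := h
  refine ⟨revWalk s, isWalk_rev ends hs, ?_⟩
  intro q hq
  simp only [revWalk, List.mem_reverse, List.mem_map] at hq
  obtain ⟨a, ha, rfl⟩ := hq
  exact has a ha

lemma reach_step {e f : Fin m} (hne : f ≠ e) : Reach ends e (ends f).1 (ends f).2 :=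
  ⟨[(f, true)], ⟨rfl, rfl⟩, by simpa using hne⟩

/-- every vertex reachable by a walk from `i` is reachable avoiding `e` from `i`,
or from one of the endpoints of `e`. -/
lemma dichotomy_aux (e : Fin m) :
    ∀ {s : List (Fin m × Bool)} {i k : Fin n}, IsWalk ends i k s →
      Reach ends e i k ∨ Reach ends e (ends e).1 k ∨ Reach ends e (ends e).2 k := by
  intro s
  induction s with
  | nil =>
    intro i k hs
    have h : i = k := hs
    subst h
    exact Or.inl (reach_refl ends e i)
  | cons q r ih =>
    intro i k hs
    obtain ⟨f, b⟩ := q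
    by_cases hf : f = e
    · subst hf
      cases b
      · obtain ⟨h1, h2⟩ := hs
        rcases ih h2 with h | h | h
        · exact Or.inr (Or.inl h)
        · exact Or.inr (Or.inl h)
        · exact Or.inr (Or.inr h)
      · obtain ⟨h1, h2⟩ := hs
        rcases ih h2 with h | h | h
        · exact Or.inr (Or.inr h)
        · exact Or.inr (Or.inl h)
        · exact Or.inr (Or.inr h)
    · cases b
      · obtain ⟨h1, h2⟩ := hs
        rcases ih h2 with h | h | h
        · refine Or.inl (reach_trans ends ?_ h)
          exact h1 ▸ reach_symm ends (reach_step ends hf)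
        · exact Or.inr (Or.inl h)
        · exact Or.inr (Or.inr h)
      · obtain ⟨h1, h2⟩ := hs
        rcases ih h2 with h | h | h
        · refine Or.inl (reach_trans ends ?_ h)
          exact h1 ▸ reach_step ends hf
        · exact Or.inr (Or.inl h)
        · exact Or.inr (Or.inr h)

lemma dichotomy (hconn : ∀ i j : Fin n, ∃ s : List (Fin m × Bool), IsWalk ends i j s)
    (e : Fin m) (k : Fin n) :
    Reach ends e (ends e).1 k ∨ Reach ends e (ends e).2 k := by
  obtain ⟨s, hs⟩ := hconn (ends e).1 k
  rcases dichotomy_aux ends e hs with h | h | h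
  · exact Or.inl h
  · exact Or.inl h
  · exact Or.inr h

/-- along a walk avoiding `e`, every visited step's endpoints are reachable from the start. -/
lemma visits {e : Fin m} :
    ∀ {s : List (Fin m × Bool)} {x k : Fin n}, IsWalk ends x k s → (∀ q ∈ s, q.1 ≠ e) →
      ∀ q ∈ s, Reach ends e x (ends q.1).1 ∧ Reach ends e x (ends q.1).2 := by
  intro s
  induction s with
  | nil => intro x k _ _ q hq; simp at hq
  | cons a r ih =>
    intro x k hs has q hq
    obtain ⟨f, b⟩ := a
    have hf : f ≠ e := has (f, b) (by simp)
    cases b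
    · obtain ⟨h1, h2⟩ := hs
      have hx2 : Reach ends e x (ends f).2 := ⟨[], h1.symm, by simp⟩
      have hx1 : Reach ends e x (ends f).1 :=
        reach_trans ends hx2 (reach_symm ends (reach_step ends hf))
      rcases List.mem_cons.mp hq with h | h
      · subst h; exact ⟨hx1, hx2⟩
      · have := ih h2 (fun q hq => has q (List.mem_cons_of_mem _ hq)) q h
        exact ⟨reach_trans ends hx1 this.1, reach_trans ends hx1 this.2⟩
    · obtain ⟨h1, h2⟩ := hs
      have hx1 : Reach ends e x (ends f).1 := ⟨[], h1.symm, by simp⟩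
      have hx2 : Reach ends e x (ends f).2 :=
        reach_trans ends hx1 (reach_step ends hf)
      rcases List.mem_cons.mp hq with h | h
      · subst h; exact ⟨hx1, hx2⟩
      · have := ih h2 (fun q hq => has q (List.mem_cons_of_mem _ hq)) q h
        exact ⟨reach_trans ends hx2 this.1, reach_trans ends hx2 this.2⟩

lemma last_occ {A : Type*} (P : A → Prop) [DecidablePred P] :
    ∀ (r : List A), (∃ q ∈ r, P q) →
      ∃ u q0 v, r = u ++ q0 :: v ∧ P q0 ∧ ∀ q ∈ v, ¬ P q := by
  intro r
  induction r with
  | nil => rintro ⟨q, hq, _⟩; simp at hq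
  | cons x t ih =>
    intro hex
    by_cases ht : ∃ q ∈ t, P q
    · obtain ⟨u, q0, v, h1, h2, h3⟩ := ih ht
      exact ⟨x :: u, q0, v, by rw [h1]; rfl, h2, h3⟩
    · push_neg at ht
      obtain ⟨q, hq, hPq⟩ := hex
      rcases List.mem_cons.mp hq with h | h
      · subst h
        exact ⟨[], q, t, rfl, hPq, ht⟩
      · exact absurd hPq (ht q h)

lemma isWalk_split {u v : List (Fin m × Bool)} :
    ∀ {i k : Fin n}, IsWalk ends i k (u ++ v) → ∃ z, IsWalk ends i z u ∧ IsWalk ends z k v := by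
  induction u with
  | nil => intro i k h; exact ⟨i, rfl, h⟩
  | cons a r ih =>
    intro i k h
    obtain ⟨f, b⟩ := a
    cases b
    · obtain ⟨h1, h2⟩ := h
      obtain ⟨z, hz1, hz2⟩ := ih h2
      exact ⟨z, ⟨h1, hz1⟩, hz2⟩
    · obtain ⟨h1, h2⟩ := h
      obtain ⟨z, hz1, hz2⟩ := ih h2
      exact ⟨z, ⟨h1, hz1⟩, hz2⟩

noncomputable def opp (e : Fin m) (i : Fin n) : Fin n :=
  if (ends e).1 = i then (ends e).2 else (ends e).1

/-- existence: for every `k ≠ i` there is an edge incident to `i` whose other side reaches `k`. -/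
lemma exists_edge (hloop : ∀ e, (ends e).1 ≠ (ends e).2) (k : Fin n) :
    ∀ (N : ℕ) (s : List (Fin m × Bool)), s.length ≤ N → ∀ i : Fin n, IsWalk ends i k s → i ≠ k →
      ∃ e : Fin m, ((ends e).1 = i ∨ (ends e).2 = i) ∧ Reach ends e (opp ends e i) k := by
  intro N
  induction N with
  | zero =>
    intro s hlen i hs hik
    match s with
    | [] => exact absurd (hs : i = k) hik
    | a :: r => simp at hlen
  | succ N ih =>
    intro s hlen i hs hik
    match s with
    | [] => exact absurd (hs : i = k) hik
    | (f, b) :: r =>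
      -- mid: endpoint after the first step
      by_cases hr : ∀ q ∈ r, q.1 ≠ f
      · -- the rest avoids f
        refine ⟨f, ?_, ?_⟩
        · cases b
          · exact Or.inr hs.1
          · exact Or.inl hs.1
        · cases b
          · obtain ⟨h1, h2⟩ := hs
            have : opp ends f i = (ends f).1 := by
              unfold opp
              rw [if_neg]
              rw [← h1]
              exact hloop f
            rw [this]
            exact ⟨r, h2, hr⟩
          · obtain ⟨h1, h2⟩ := hs
            have : opp ends f i = (ends f).2 := by
              unfold opp
              rw [if_pos h1]
            rw [this]
            exact ⟨r, h2, hr⟩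
      · -- the rest uses f again; shortcut past the last use
        push_neg at hr
        obtain ⟨q, hq, hqf⟩ := hr
        obtain ⟨u, q0, v, hsplit, hq0, hv⟩ :=
          last_occ (fun q : Fin m × Bool => q.1 = f) r ⟨q, hq, hqf⟩
        -- walk structure
        have hwr : IsWalk ends (if b then (ends f).2 else (ends f).1) k r := by
          cases b
          · exact hs.2
          · exact hs.2
        rw [hsplit] at hwr
        obtain ⟨z, hzu, hzv⟩ := isWalk_split ends hwr
        obtain ⟨g, c⟩ := q0
        have hgf : g = f := hq0
        rw [hgf] at hzv hsplit
        have hlenv : v.length + 1 ≤ N := by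
          have : ((f, b) :: (u ++ (f, c) :: v)).length ≤ N + 1 := hsplit ▸ hlen
          simp [List.length_append] at this
          omega
        -- after the step (f,c) in the middle, position is an endpoint of f
        cases c
        · -- step (f,false): z = (ends f).2, then from (ends f).1 走 v
          obtain ⟨hz1, hz2⟩ := hzv
          -- hz2 : IsWalk (ends f).1 k v
          cases b
          · -- i = (ends f).2, so start of v is (ends f).1 ≠ i; walk (f,false)::v from i
            have h1 : (ends f).2 = i := hs.1
            have : IsWalk ends i k ((f, false) :: v) := ⟨h1, hz2⟩
            exact ih ((f, false) :: v) (by simpa using hlenv) i this hik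
          · -- i = (ends f).1 = start of v
            have h1 : (ends f).1 = i := hs.1
            exact ih v (by omega) i (h1 ▸ hz2) hik
        · obtain ⟨hz1, hz2⟩ := hzv
          -- hz2 : IsWalk (ends f).2 k v
          cases b
          · have h1 : (ends f).2 = i := hs.1
            exact ih v (by omega) i (h1 ▸ hz2) hik
          · have h1 : (ends f).1 = i := hs.1
            have : IsWalk ends i k ((f, true) :: v) := ⟨h1, hz2⟩
            exact ih ((f, true) :: v) (by simpa using hlenv) i this hik


lemma not_both_ends (B : Matrix (Fin n) (Fin m) ℝ)
    (hB : ∀ i e, B i e =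
      (if (ends e).1 = i then (1 : ℝ) else 0) - (if (ends e).2 = i then 1 else 0))
    (hker : ∀ J : Fin m → ℝ, B.mulVec J = 0 → J = 0)
    (e : Fin m) (k : Fin n) :
    ¬ (Reach ends e (ends e).1 k ∧ Reach ends e (ends e).2 k) := fun ⟨a, b⟩ =>
  sep ends B hB hker e (reach_trans ends a (reach_symm ends b))

lemma not_both_incident (B : Matrix (Fin n) (Fin m) ℝ)
    (hB : ∀ i e, B i e =
      (if (ends e).1 = i then (1 : ℝ) else 0) - (if (ends e).2 = i then 1 else 0))
    (hker : ∀ J : Fin m → ℝ, B.mulVec J = 0 → J = 0)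
    {e : Fin m} {i k : Fin n} (hinc : (ends e).1 = i ∨ (ends e).2 = i)
    (h1 : Reach ends e i k) (h2 : Reach ends e (opp ends e i) k) : False := by
  rcases hinc with h | h
  · have hopp : opp ends e i = (ends e).2 := by unfold opp; rw [if_pos h]
    exact not_both_ends ends B hB hker e k ⟨h ▸ h1, hopp ▸ h2⟩
  · by_cases h' : (ends e).1 = i
    · have hopp : opp ends e i = (ends e).2 := by unfold opp; rw [if_pos h']
      exact not_both_ends ends B hB hker e k ⟨h' ▸ h1, hopp ▸ h2⟩
    · have hopp : opp ends e i = (ends e).1 := by unfold opp; rw [if_neg h']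
      exact not_both_ends ends B hB hker e k ⟨hopp ▸ h2, h ▸ h1⟩

/-- a single step along an edge `f ≠ e` incident to `i`, towards its other endpoint. -/
lemma reach_step_opp {e f : Fin m} {i : Fin n} (hne : f ≠ e)
    (hinc : (ends f).1 = i ∨ (ends f).2 = i) : Reach ends e i (opp ends f i) := by
  rcases hinc with h | h
  · have hopp : opp ends f i = (ends f).2 := by unfold opp; rw [if_pos h]
    rw [hopp, ← h]
    exact reach_step ends hne
  · by_cases h' : (ends f).1 = i
    · have hopp : opp ends f i = (ends f).2 := by unfold opp; rw [if_pos h']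
      rw [hopp, ← h']
      exact reach_step ends hne
    · have hopp : opp ends f i = (ends f).1 := by unfold opp; rw [if_neg h']
      rw [hopp, ← h]
      exact reach_symm ends (reach_step ends hne)

/-- uniqueness of the edge at `i` separating `i` from `k`. -/
lemma uniq_edge (B : Matrix (Fin n) (Fin m) ℝ)
    (hB : ∀ i e, B i e =
      (if (ends e).1 = i then (1 : ℝ) else 0) - (if (ends e).2 = i then 1 else 0))
    (hker : ∀ J : Fin m → ℝ, B.mulVec J = 0 → J = 0)
    {e1 e2 : Fin m} {i k : Fin n} (hne : e1 ≠ e2)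
    (h1 : (ends e1).1 = i ∨ (ends e1).2 = i) (h2 : (ends e2).1 = i ∨ (ends e2).2 = i)
    (r1 : Reach ends e1 (opp ends e1 i) k) (r2 : Reach ends e2 (opp ends e2 i) k) : False := by
  obtain ⟨s, hs, has⟩ := r2
  -- the walk `s` (avoiding e2) cannot use e1, else it would visit `i`
  have hav1 : ∀ q ∈ s, q.1 ≠ e1 := by
    intro q hq
    intro hqe
    have hvis := visits ends hs has q hq
    rw [hqe] at hvis
    have hreach_i : Reach ends e2 (opp ends e2 i) i := by
      rcases h1 with h | h
      · exact h ▸ hvis.1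
      · exact h ▸ hvis.2
    exact not_both_incident ends B hB hker h2 (reach_refl ends e2 i)
      (reach_trans ends hreach_i (reach_refl ends e2 i))
  have r2' : Reach ends e1 (opp ends e2 i) k := ⟨s, hs, hav1⟩
  have hstep : Reach ends e1 i (opp ends e2 i) := reach_step_opp ends (Ne.symm hne) h2
  exact not_both_incident ends B hB hker h1 (reach_trans ends hstep r2') r1

lemma count_eq (B : Matrix (Fin n) (Fin m) ℝ)
    (hB : ∀ i e, B i e =
      (if (ends e).1 = i then (1 : ℝ) else 0) - (if (ends e).2 = i then 1 else 0))
    (hker : ∀ J : Fin m → ℝ, B.mulVec J = 0 → J = 0)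
    (hloop : ∀ e, (ends e).1 ≠ (ends e).2)
    (hconn : ∀ i j : Fin n, ∃ s : List (Fin m × Bool), IsWalk ends i j s)
    (i k : Fin n) :
    ∑ e : Fin m, (if ((ends e).1 = i ∨ (ends e).2 = i) ∧ Reach ends e (opp ends e i) k
      then (1:ℝ) else 0) = if k = i then 0 else 1 := by
  by_cases hk : k = i
  · subst hk
    rw [if_pos rfl]
    refine Finset.sum_eq_zero ?_
    intro e _
    rw [if_neg]
    rintro ⟨hinc, hr⟩
    exact not_both_incident ends B hB hker hinc (reach_refl ends e k) hr
  · rw [if_neg hk]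
    obtain ⟨s, hs⟩ := hconn i k
    obtain ⟨e0, hinc0, hr0⟩ :=
      exists_edge ends hloop k s.length s le_rfl i hs (fun h => hk (h.symm))
    rw [Finset.sum_eq_single e0]
    · rw [if_pos ⟨hinc0, hr0⟩]
    · intro e _ hne
      rw [if_neg]
      rintro ⟨hinc, hr⟩
      exact uniq_edge ends B hB hker hne hinc hinc0 hr hr0
    · intro h
      exact absurd (Finset.mem_univ e0) h


lemma term_eq (B : Matrix (Fin n) (Fin m) ℝ)
    (hB : ∀ i e, B i e =
      (if (ends e).1 = i then (1 : ℝ) else 0) - (if (ends e).2 = i then 1 else 0))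
    (hker : ∀ J : Fin m → ℝ, B.mulVec J = 0 → J = 0)
    (hloop : ∀ e, (ends e).1 ≠ (ends e).2)
    (hconn : ∀ i j : Fin n, ∃ s : List (Fin m × Bool), IsWalk ends i j s)
    (i k : Fin n) (e : Fin m) :
    B i e * (if Reach ends e (ends e).1 k then (1:ℝ) else 0) =
      (if (ends e).1 = i then (1:ℝ) else 0) -
      (if ((ends e).1 = i ∨ (ends e).2 = i) ∧ Reach ends e (opp ends e i) k
        then 1 else 0) := by
  rw [hB]
  by_cases ht : (ends e).1 = i
  · by_cases hh : (ends e).2 = i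
    · exact absurd (ht.trans hh.symm) (hloop e)
    · have hopp : opp ends e i = (ends e).2 := by unfold opp; rw [if_pos ht]
      by_cases hR : Reach ends e (ends e).2 k
      · have hnR : ¬ Reach ends e (ends e).1 k := fun h =>
          not_both_ends ends B hB hker e k ⟨h, hR⟩
        rw [ht] at hnR
        simp [ht, hh, hR, hnR, hopp]
      · have hRt : Reach ends e (ends e).1 k := by
          rcases dichotomy ends hconn e k with h | h
          · exact h
          · exact absurd h hR
        rw [ht] at hRt
        simp [ht, hh, hR, hRt, hopp]
  · by_cases hh : (ends e).2 = i
    · have hopp : opp ends e i = (ends e).1 := by unfold opp; rw [if_neg ht]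
      by_cases hR : Reach ends e (ends e).1 k
      · simp [ht, hh, hR, hopp]
      · simp [ht, hh, hR, hopp]
    · simp [ht, hh]

lemma mulVec_K (B : Matrix (Fin n) (Fin m) ℝ)
    (hB : ∀ i e, B i e =
      (if (ends e).1 = i then (1 : ℝ) else 0) - (if (ends e).2 = i then 1 else 0))
    (hker : ∀ J : Fin m → ℝ, B.mulVec J = 0 → J = 0)
    (hloop : ∀ e, (ends e).1 ≠ (ends e).2)
    (hconn : ∀ i j : Fin n, ∃ s : List (Fin m × Bool), IsWalk ends i j s)
    (γ : Fin n → ℝ) (hγ : ∑ x, γ x = 1) (i : Fin n) :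
    (B.mulVec (fun e => ∑ k, if Reach ends e (ends e).1 k then γ k else 0)) i
      = (∑ e, if (ends e).1 = i then (1:ℝ) else 0) - 1 + γ i := by
  have h1 : (B.mulVec (fun e => ∑ k, if Reach ends e (ends e).1 k then γ k else 0)) i
      = ∑ e, ∑ k, γ k * (B i e * (if Reach ends e (ends e).1 k then (1:ℝ) else 0)) := by
    simp only [Matrix.mulVec, dotProduct]
    refine Finset.sum_congr rfl ?_
    intro e _
    rw [Finset.mul_sum]
    refine Finset.sum_congr rfl ?_
    intro k _
    by_cases hR : Reach ends e (ends e).1 k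
    · simp [hR]; ring
    · simp [hR]
  rw [h1, Finset.sum_comm]
  have h2 : ∀ k, ∑ e, γ k * (B i e * (if Reach ends e (ends e).1 k then (1:ℝ) else 0))
      = γ k * ((∑ e, if (ends e).1 = i then (1:ℝ) else 0) - (if k = i then 0 else 1)) := by
    intro k
    rw [← Finset.mul_sum]
    congr 1
    calc ∑ e, B i e * (if Reach ends e (ends e).1 k then (1:ℝ) else 0)
        = ∑ e, ((if (ends e).1 = i then (1:ℝ) else 0) -
            (if ((ends e).1 = i ∨ (ends e).2 = i) ∧ Reach ends e (opp ends e i) k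
              then 1 else 0)) :=
          Finset.sum_congr rfl fun e _ => term_eq ends B hB hker hloop hconn i k e
      _ = (∑ e, if (ends e).1 = i then (1:ℝ) else 0) - (if k = i then 0 else 1) := by
          rw [Finset.sum_sub_distrib, count_eq ends B hB hker hloop hconn i k]
  calc ∑ k, ∑ e, γ k * (B i e * (if Reach ends e (ends e).1 k then (1:ℝ) else 0))
      = ∑ k, γ k * ((∑ e, if (ends e).1 = i then (1:ℝ) else 0) - (if k = i then 0 else 1)) :=
        Finset.sum_congr rfl fun k _ => h2 k
    _ = (∑ e, if (ends e).1 = i then (1:ℝ) else 0) - 1 + γ i := by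
        set D := (∑ e, if (ends e).1 = i then (1:ℝ) else 0) with hD
        have : ∀ k, γ k * (D - (if k = i then 0 else 1))
            = γ k * D - (γ k - (if k = i then γ k else 0)) := by
          intro k
          by_cases hk : k = i <;> simp [hk] <;> ring
        rw [Finset.sum_congr rfl fun k _ => this k, Finset.sum_sub_distrib,
          Finset.sum_sub_distrib, ← Finset.sum_mul, hγ, Finset.sum_ite_eq' Finset.univ i γ]
        simp
        ring


end TreeBeck

/-- On a weighted tree (encoded by an oriented incidence matrix
with trivial kernel and a connected edge structure), the flow `K_α − K_β`,
where `K_α(e)` is the total `α`-mass of the component of the tail of `e` after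
removing `e`, is the unique flow with `BJ = α − β`; hence
`B_p(α,β) = ‖K_α − K_β‖_{w,p}` for all `1 ≤ p < ∞`. -/
theorem tree_beckmann
    (n m : ℕ) (ends : Fin m → Fin n × Fin n)
    (hloop : ∀ e, (ends e).1 ≠ (ends e).2)
    (w : Fin m → ℝ) (hw : ∀ e, 0 < w e)
    (B : Matrix (Fin n) (Fin m) ℝ)
    (hB : ∀ i e, B i e =
      (if (ends e).1 = i then (1 : ℝ) else 0) - (if (ends e).2 = i then 1 else 0))
    (hker : ∀ J : Fin m → ℝ, B.mulVec J = 0 → J = 0)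
    (hconn : ∀ i j : Fin n, ∃ s : List (Fin m × Bool), IsWalk ends i j s)
    (p : ℝ) (hp : 1 ≤ p)
    (α β : Fin n → ℝ)
    (hα : (∀ i, 0 ≤ α i) ∧ ∑ i, α i = 1)
    (hβ : (∀ i, 0 ≤ β i) ∧ ∑ i, β i = 1) :
    let K : (Fin n → ℝ) → Fin m → ℝ := fun γ e =>
      ∑ k : Fin n, if (∃ s : List (Fin m × Bool),
          IsWalk ends (ends e).1 k s ∧ ∀ q ∈ s, q.1 ≠ e) then γ k else 0
    B.mulVec (fun e => K α e - K β e) = α - β ∧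
    (∀ J : Fin m → ℝ, B.mulVec J = α - β → J = fun e => K α e - K β e) ∧
    sInf {c : ℝ | ∃ J : Fin m → ℝ, B.mulVec J = α - β ∧
        c = (∑ e, w e * |J e| ^ p) ^ (1 / p)}
      = (∑ e, w e * |K α e - K β e| ^ p) ^ (1 / p) := by
  intro K
  have hKeq : ∀ γ : Fin n → ℝ, K γ =
      fun e => ∑ k, if TreeBeck.Reach ends e (ends e).1 k then γ k else 0 := fun γ => rfl
  have hKα : ∀ i, (B.mulVec (K α)) i
      = (∑ e, if (ends e).1 = i then (1:ℝ) else 0) - 1 + α i := by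
    intro i
    rw [hKeq]
    exact TreeBeck.mulVec_K ends B hB hker hloop hconn α hα.2 i
  have hKβ : ∀ i, (B.mulVec (K β)) i
      = (∑ e, if (ends e).1 = i then (1:ℝ) else 0) - 1 + β i := by
    intro i
    rw [hKeq]
    exact TreeBeck.mulVec_K ends B hB hker hloop hconn β hβ.2 i
  have part1 : B.mulVec (fun e => K α e - K β e) = α - β := by
    funext i
    have hsub : B.mulVec (fun e => K α e - K β e) i = B.mulVec (K α) i - B.mulVec (K β) i := by
      rw [show (fun e => K α e - K β e) = K α - K β from rfl, Matrix.mulVec_sub]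
      rfl
    rw [hsub, hKα i, hKβ i]
    simp [Pi.sub_apply]
  have part2 : ∀ J : Fin m → ℝ, B.mulVec J = α - β → J = fun e => K α e - K β e := by
    intro J hJ
    have hz : B.mulVec (J - fun e => K α e - K β e) = 0 := by
      rw [Matrix.mulVec_sub, hJ, part1]
      simp
    have := hker _ hz
    funext e
    have he := congrFun this e
    simpa [sub_eq_zero] using he
  refine ⟨part1, part2, ?_⟩
  have hset : {c : ℝ | ∃ J : Fin m → ℝ, B.mulVec J = α - β ∧
      c = (∑ e, w e * |J e| ^ p) ^ (1 / p)}
      = {(∑ e, w e * |K α e - K β e| ^ p) ^ (1 / p)} := by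
    ext c
    simp only [Set.mem_setOf_eq, Set.mem_singleton_iff]
    constructor
    · rintro ⟨J, hJ, rfl⟩
      rw [part2 J hJ]
    · rintro rfl
      exact ⟨_, part1, rfl⟩
  rw [hset, csInf_singleton]
end

section
/- For any coupling π of probability vectors α, β on a connected weighted graph, the measure effective resistance satisfies r_{αβ} = (α−β)ᵀL⁺(α−β) ≤ Σ_{i,j} π_{ij} r_{ij}, where r_{ij} = (δᵢ − δⱼ)ᵀ L⁺ (δᵢ − δⱼ) is the pairwise effective resistance. -/
/-!
The resistance form `x ↦ xᵀ L⁺ x` is a nonnegative quadratic form, since `L⁺ = L⁺ L L⁺` with `L⁺`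
symmetric, and hence convex. The marginal conditions on `π` exhibit `α − β` as the convex combination
`∑ π i j • (δ i − δ j)`, so Jensen's inequality gives the bound.
-/

open Matrix Finset

namespace Matrix

variable {ι : Type*} [Fintype ι]

theorem transpose_eq_of_isMoorePenroseInverse {R : Type*} [CommRing R] {A P : Matrix ι ι R}
    (hA : Aᵀ = A) (h1 : A * P * A = A) (h2 : P * A * P = P)
    (h3 : (A * P)ᵀ = A * P) (h4 : (P * A)ᵀ = P * A) : Pᵀ = P := by
  have e1 : Pᵀ * A = A * P := by rw [← h3, transpose_mul, hA]
  have e2 : A * Pᵀ = P * A := by rw [← h4, transpose_mul, hA]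
  have hPPtA : P * Pᵀ * A = P := by rw [mul_assoc, e1, ← mul_assoc, h2]
  have hPPA : P * P * A = P := by
    calc P * P * A = P * Pᵀ * A * P * A := by rw [hPPtA]
      _ = P * Pᵀ * (A * P * A) := by simp only [mul_assoc]
      _ = P := by rw [h1, hPPtA]
  calc Pᵀ = (P * P * A)ᵀ := by rw [hPPA]
    _ = A * Pᵀ * Pᵀ := by rw [transpose_mul, transpose_mul, hA, mul_assoc]
    _ = P * A * Pᵀ := by rw [e2]
    _ = P := by rw [mul_assoc, e2, ← mul_assoc, hPPA]

theorem PosSemidef.posSemidef_of_isMoorePenroseInverse {A P : Matrix ι ι ℝ}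
    (hA : A.PosSemidef) (h1 : A * P * A = A) (h2 : P * A * P = P)
    (h3 : (A * P)ᵀ = A * P) (h4 : (P * A)ᵀ = P * A) : P.PosSemidef := by
  have hP : Pᵀ = P := transpose_eq_of_isMoorePenroseInverse hA.1 h1 h2 h3 h4
  have hconj : Pᴴ * A * P = P := by rw [conjTranspose_eq_transpose_of_trivial, hP, h2]
  exact hconj ▸ hA.conjTranspose_mul_mul_same P

/-- `a q(x) + b q(y) − q(a x + b y) = a b q(x − y)` when `a + b = 1`. -/
theorem convexOn_dotProduct_mulVec_self {𝕜 : Type*} [Field 𝕜] [LinearOrder 𝕜]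
    [IsStrictOrderedRing 𝕜] {A : Matrix ι ι 𝕜} (hA : ∀ x, 0 ≤ x ⬝ᵥ A *ᵥ x) :
    ConvexOn 𝕜 Set.univ fun x => x ⬝ᵥ A *ᵥ x := by
  refine ⟨convex_univ, fun x _ y _ a b ha hb hab => ?_⟩
  have hxy := hA (x - y)
  simp only [mulVec_add, mulVec_sub, mulVec_smul, dotProduct_add, dotProduct_sub, add_dotProduct,
    sub_dotProduct, smul_dotProduct, dotProduct_smul, smul_eq_mul] at hxy ⊢
  obtain rfl : b = 1 - a := by linear_combination hab
  nlinarith [mul_nonneg (mul_nonneg ha hb) hxy]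

end Matrix

theorem sum_sum_smul_single_sub_single {ι R : Type*} [Fintype ι] [DecidableEq ι] [Ring R]
    {α β : ι → R} {π : ι → ι → R} (hrow : ∀ i, ∑ j, π i j = α i) (hcol : ∀ j, ∑ i, π i j = β j) :
    ∑ i, ∑ j, π i j • (Pi.single i 1 - Pi.single j 1 : ι → R) = α - β := by
  simp only [smul_sub, sum_sub_distrib]
  congr 1
  · ext k
    simp [Finset.sum_apply, Pi.single_apply, hrow]
  · rw [sum_comm]
    ext k
    simp [Finset.sum_apply, Pi.single_apply, hcol]

theorem measure_resistance_le_coupling_avg_general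
    (n : ℕ) (L Lp : Matrix (Fin n) (Fin n) ℝ)
    (hpsd : L.PosSemidef)
    (hp1 : L * Lp * L = L) (hp2 : Lp * L * Lp = Lp)
    (hp3 : (L * Lp)ᵀ = L * Lp) (hp4 : (Lp * L)ᵀ = Lp * L)
    (α β : Fin n → ℝ)
    (hα : (∀ i, 0 ≤ α i) ∧ ∑ i, α i = 1)
    (π : Matrix (Fin n) (Fin n) ℝ)
    (hπpos : ∀ i j, 0 ≤ π i j)
    (hπrow : ∀ i, ∑ j, π i j = α i)
    (hπcol : ∀ j, ∑ i, π i j = β j) :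
    (α - β) ⬝ᵥ Lp.mulVec (α - β) ≤
      ∑ i, ∑ j, π i j *
        ((Pi.single i 1 - Pi.single j 1) ⬝ᵥ Lp.mulVec (Pi.single i 1 - Pi.single j 1)) := by
  have hLp := hpsd.posSemidef_of_isMoorePenroseInverse hp1 hp2 hp3 hp4
  have hconvex : ConvexOn ℝ Set.univ fun x => x ⬝ᵥ Lp *ᵥ x :=
    convexOn_dotProduct_mulVec_self fun x => by simpa using hLp.dotProduct_mulVec_nonneg x
  have hmass : ∑ p : Fin n × Fin n, π p.1 p.2 = 1 := by
    rw [Fintype.sum_prod_type]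
    simpa only [hπrow] using hα.2
  have hjensen := hconvex.map_sum_le (t := univ) (p := fun p : Fin n × Fin n =>
      (Pi.single p.1 1 - Pi.single p.2 1 : Fin n → ℝ))
    (fun p _ => hπpos p.1 p.2) hmass (fun _ _ => Set.mem_univ _)
  simpa only [Fintype.sum_prod_type, sum_sum_smul_single_sub_single hπrow hπcol,
    smul_eq_mul] using hjensen

/-- For any coupling `π` of probability vectors `α, β` on a
connected weighted graph with Laplacian `L` and pseudoinverse `Lp`, the measure
effective resistance satisfies
`(α−β)ᵀ L⁺ (α−β) ≤ Σ_{i,j} π_{ij} r_{ij}`, where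
`r_{ij} = (δᵢ − δⱼ)ᵀ L⁺ (δᵢ − δⱼ)`. -/
theorem measure_resistance_le_coupling_avg
    (n : ℕ) (L Lp : Matrix (Fin n) (Fin n) ℝ)
    (hpsd : L.PosSemidef)
    (hp1 : L * Lp * L = L) (hp2 : Lp * L * Lp = Lp)
    (hp3 : (L * Lp)ᵀ = L * Lp) (hp4 : (Lp * L)ᵀ = Lp * L)
    (α β : Fin n → ℝ)
    (hα : (∀ i, 0 ≤ α i) ∧ ∑ i, α i = 1)
    (hβ : (∀ i, 0 ≤ β i) ∧ ∑ i, β i = 1)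
    (π : Matrix (Fin n) (Fin n) ℝ)
    (hπpos : ∀ i j, 0 ≤ π i j)
    (hπrow : ∀ i, ∑ j, π i j = α i)
    (hπcol : ∀ j, ∑ i, π i j = β j) :
    (α - β) ⬝ᵥ Lp.mulVec (α - β) ≤
      ∑ i, ∑ j, π i j *
        ((Pi.single i 1 - Pi.single j 1) ⬝ᵥ Lp.mulVec (Pi.single i 1 - Pi.single j 1)) :=
  measure_resistance_le_coupling_avg_general n L Lp hpsd hp1 hp2 hp3 hp4 α β hα π hπpos hπrow hπcol
end

section
/- For probability vectors α, β on a connected weighted graph, B₂(α,β) ≤ W_{r,1}(α,β)^{1/2}, where B₂ is the 2-Beckmann distance and W_{r,1} is the 1-Wasserstein distance with ground cost equal to the effective resistance r_{ij} = (δᵢ−δⱼ)ᵀL⁺(δᵢ−δⱼ). -/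
/-!
A coupling `π` of `α` and `β` writes `α - β = ∑ i j, π i j • (δ i - δ j)`, a convex combination
since `π` has total mass one. The Moore–Penrose inverse `L⁺ = L⁺ᵀ L L⁺` of the positive
semidefinite `L` is positive semidefinite, so `x ↦ xᵀ L⁺ x` is convex, and Jensen's inequality
bounds `B₂(α, β)²` by the transport cost `∑ i j, π i j * r i j` of every coupling.
-/

open Matrix Finset

namespace Matrix

variable {m n R : Type*}

structure IsMoorePenroseInverse [Fintype m] [Fintype n] [Semiring R]
    (A : Matrix m n R) (X : Matrix n m R) : Prop where
  mul_mul_self_left : A * X * A = A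
  mul_mul_self_right : X * A * X = X
  transpose_mul_left : (A * X)ᵀ = A * X
  transpose_mul_right : (X * A)ᵀ = X * A

namespace IsMoorePenroseInverse

variable [Fintype n] [CommSemiring R] {A X : Matrix n n R}

theorem isSymm (h : A.IsMoorePenroseInverse X) (hA : A.IsSymm) : X.IsSymm := by
  have hXA : Xᵀ * A = A * X := by
    simpa only [transpose_mul, hA.eq] using h.transpose_mul_left
  have hAX : A * Xᵀ = X * A := by
    simpa only [transpose_mul, hA.eq] using h.transpose_mul_right
  have hcomm : X * A = A * X := by
    rw [← hAX, ← hXA]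
    calc A * Xᵀ = A * X * (A * Xᵀ) := by rw [← Matrix.mul_assoc, h.mul_mul_self_left]
      _ = Xᵀ * A * (X * A) := by rw [hAX, hXA]
      _ = Xᵀ * (A * X * A) := by simp only [Matrix.mul_assoc]
      _ = Xᵀ * A := by rw [h.mul_mul_self_left]
  have hX : Xᵀ * A * Xᵀ = Xᵀ := by
    simpa only [transpose_mul, hA.eq, Matrix.mul_assoc] using
      congrArg transpose h.mul_mul_self_right
  calc Xᵀ = Xᵀ * A * Xᵀ := hX.symm
    _ = Xᵀ * A * X := by rw [Matrix.mul_assoc, hAX, hcomm, Matrix.mul_assoc]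
    _ = X * A * X := by rw [hXA, hcomm]
    _ = X := h.mul_mul_self_right

theorem posSemidef {A X : Matrix n n ℝ} (h : A.IsMoorePenroseInverse X) (hA : A.PosSemidef) :
    X.PosSemidef := by
  have hXt : Xᴴ = X := by
    rw [conjTranspose_eq_transpose_of_trivial]
    exact (h.isSymm (isHermitian_iff_isSymm.mp hA.1)).eq
  simpa only [hXt, h.mul_mul_self_right] using hA.conjTranspose_mul_mul_same X

end IsMoorePenroseInverse

theorem PosSemidef.convexOn_dotProduct_mulVec [Fintype n] {M : Matrix n n ℝ}
    (hM : M.PosSemidef) : ConvexOn ℝ Set.univ fun x => x ⬝ᵥ M *ᵥ x := by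
  refine ⟨convex_univ, fun x _ y _ a b ha hb hab => ?_⟩
  have hsymm : y ⬝ᵥ M *ᵥ x = x ⬝ᵥ M *ᵥ y := by
    rw [dotProduct_mulVec, ← vecMul_transpose, ← conjTranspose_eq_transpose_of_trivial,
      hM.1.eq, dotProduct_comm]
  have hdiff := hM.dotProduct_mulVec_nonneg (x - y)
  simp only [star_trivial, mulVec_sub, dotProduct_sub, sub_dotProduct, hsymm] at hdiff
  simp only [mulVec_add, mulVec_smul, dotProduct_add, add_dotProduct, dotProduct_smul,
    smul_dotProduct, hsymm, smul_eq_mul]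
  obtain rfl : b = 1 - a := by linarith
  nlinarith [mul_nonneg (mul_nonneg ha hb) hdiff]

theorem sum_sum_smul_single_sub_single [Fintype n] [DecidableEq n] [Ring R] (π : Matrix n n R) :
    ∑ i, ∑ j, π i j • (Pi.single i 1 - Pi.single j 1 : n → R) =
      (fun i => ∑ j, π i j) - fun j => ∑ i, π i j := by
  ext k
  simp only [Finset.sum_apply, Pi.smul_apply, Pi.sub_apply, smul_eq_mul, Pi.single_apply,
    mul_sub, mul_ite, mul_one, mul_zero, sum_sub_distrib]
  rw [sum_comm (f := fun i j => if k = i then π i j else 0)]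
  simp

theorem PosSemidef.dotProduct_mulVec_sub_le_of_coupling [Fintype n] [DecidableEq n]
    {M π : Matrix n n ℝ} (hM : M.PosSemidef) {α β : n → ℝ} (hπ : ∀ i j, 0 ≤ π i j)
    (hrow : ∀ i, ∑ j, π i j = α i) (hcol : ∀ j, ∑ i, π i j = β j) (hα : ∑ i, α i = 1) :
    (α - β) ⬝ᵥ M *ᵥ (α - β) ≤ ∑ i, ∑ j, π i j *
      ((Pi.single i 1 - Pi.single j 1) ⬝ᵥ M *ᵥ (Pi.single i 1 - Pi.single j 1)) := by
  let v : n × n → n → ℝ := fun p => Pi.single p.1 1 - Pi.single p.2 1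
  have hflow : α - β = ∑ p : n × n, π p.1 p.2 • v p := by
    simp only [v, Fintype.sum_prod_type]
    rw [sum_sum_smul_single_sub_single, funext hrow, funext hcol]
  have hmass : ∑ p : n × n, π p.1 p.2 = 1 := by
    simp only [Fintype.sum_prod_type]
    simpa only [hrow] using hα
  calc (α - β) ⬝ᵥ M *ᵥ (α - β)
      = (∑ p : n × n, π p.1 p.2 • v p) ⬝ᵥ M *ᵥ ∑ p : n × n, π p.1 p.2 • v p := by rw [hflow]
    _ ≤ ∑ p : n × n, π p.1 p.2 • (v p ⬝ᵥ M *ᵥ v p) :=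
      hM.convexOn_dotProduct_mulVec.map_sum_le (fun p _ => hπ p.1 p.2) hmass
        fun _ _ => Set.mem_univ _
    _ = _ := Fintype.sum_prod_type _

end Matrix

/-- For probability vectors `α, β` on a connected weighted graph,
`B₂(α,β) ≤ W_{r,1}(α,β)^{1/2}`, where `B₂(α,β)² = (α−β)ᵀ L⁺ (α−β)` and
`W_{r,1}` is the 1-Wasserstein distance with ground cost the effective
resistance `r_{ij} = (δᵢ−δⱼ)ᵀ L⁺ (δᵢ−δⱼ)`. -/
theorem b2_le_sqrt_wasserstein_resistance
    (n : ℕ) (L Lp : Matrix (Fin n) (Fin n) ℝ)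
    (hpsd : L.PosSemidef)
    (hp1 : L * Lp * L = L) (hp2 : Lp * L * Lp = Lp)
    (hp3 : (L * Lp)ᵀ = L * Lp) (hp4 : (Lp * L)ᵀ = Lp * L)
    (α β : Fin n → ℝ)
    (hα : (∀ i, 0 ≤ α i) ∧ ∑ i, α i = 1)
    (hβ : (∀ i, 0 ≤ β i) ∧ ∑ i, β i = 1) :
    Real.sqrt ((α - β) ⬝ᵥ Lp.mulVec (α - β)) ≤
      Real.sqrt (sInf {c : ℝ | ∃ π : Matrix (Fin n) (Fin n) ℝ,
        (∀ i j, 0 ≤ π i j) ∧ (∀ i, ∑ j, π i j = α i) ∧ (∀ j, ∑ i, π i j = β j) ∧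
        c = ∑ i, ∑ j, π i j *
          ((Pi.single i 1 - Pi.single j 1) ⬝ᵥ
            Lp.mulVec (Pi.single i 1 - Pi.single j 1))}) := by
  have hLp : Lp.PosSemidef :=
    IsMoorePenroseInverse.posSemidef ⟨hp1, hp2, hp3, hp4⟩ hpsd
  refine Real.sqrt_le_sqrt (le_csInf ⟨_, vecMulVec α β,
    fun i j => mul_nonneg (hα.1 i) (hβ.1 j),
    fun i => by simp only [vecMulVec_apply, ← mul_sum, hβ.2, mul_one],
    fun j => by simp only [vecMulVec_apply, ← sum_mul, hα.2, one_mul], rfl⟩ ?_)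
  rintro _ ⟨π, hπ, hrow, hcol, rfl⟩
  exact hLp.dotProduct_mulVec_sub_le_of_coupling hπ hrow hcol hα.2
end
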